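/- arXiv:2202.13340 — 4 statements merged into one kernel-verified Lean document; each statement's English description precedes it below -/
import Mathlib

section
/- The number of rooted ternary trees with n internal nodes, i.e., the Fuss-Catalan number (1/(2n+1))*binomial(3n,n), satisfies the recurrence obtained from S = z(1+S)^3, namely a_0 = 1 and a_{n} = sum over i+j+k = n-1 of a_i * a_j * a_k, where a_n = (1/(2n+1))*binomial(3n,n). -/
/-!
A forest of `p` ordered `m`-ary trees with `n + 1` internal nodes either starts with a leaf
(leaving `p - 1` trees) or with an internal node (leaving its `m` subtrees followed by the other
`p - 1` trees). Counting forests `F(p, n)` by this recurrence, concatenation of forests gives the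
convolution `F(p) * F(q) = F(p + q)`, and the recurrence itself checks the closed form
`F(p, n) = p / (mn + p) * C(mn + p, n)`. For ternary trees, `F(1, n + 1) = F(3, n)` is then the
cubic convolution of `F(1)`, and `F(1, n)` is the Fuss–Catalan number.
-/

open Finset

/-- Forests of `p` ordered `m`-ary trees with `n` internal nodes. -/
def forestCount (m : ℕ) : ℕ → ℕ → ℕ
  | _, 0 => 1
  | 0, _ + 1 => 0
  | p + 1, n + 1 => forestCount m p (n + 1) + forestCount m (p + m) n
termination_by p n => (n, p)

namespace forestCount

variable (m : ℕ)

@[simp]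
theorem zero_right (p : ℕ) : forestCount m p 0 = 1 := by
  cases p <;> simp [forestCount]

@[simp]
theorem zero_succ (n : ℕ) : forestCount m 0 (n + 1) = 0 := by
  simp [forestCount]

theorem succ_succ (p n : ℕ) :
    forestCount m (p + 1) (n + 1) = forestCount m p (n + 1) + forestCount m (p + m) n := by
  rw [forestCount]

theorem one_succ (n : ℕ) : forestCount m 1 (n + 1) = forestCount m m n := by
  simp [succ_succ]

theorem sum_antidiagonal_mul (p q n : ℕ) :
    ∑ x ∈ antidiagonal n, forestCount m p x.1 * forestCount m q x.2 = forestCount m (p + q) n := by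
  induction p, n using forestCount.induct m generalizing q with
  | case1 p => simp
  | case2 n => simp [Nat.sum_antidiagonal_succ]
  | case3 p n ih_leaf ih_node =>
    have h_leaf := ih_leaf q
    rw [Nat.sum_antidiagonal_succ, zero_right, one_mul] at h_leaf
    rw [Nat.sum_antidiagonal_succ, show p + 1 + q = p + q + 1 by omega, succ_succ, ← h_leaf,
      show p + q + m = p + m + q by omega, ← ih_node]
    simp only [succ_succ, zero_right, one_mul, add_mul, sum_add_distrib]
    ring

theorem mul_eq_choose {m : ℕ} (hm : 0 < m) (p n : ℕ) :
    forestCount m p n * (m * n + p) = p * (m * n + p).choose n := by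
  induction p, n using forestCount.induct m with
  | case1 p => simp
  | case2 n => simp
  | case3 p n ih_leaf ih_node =>
    set N := m * (n + 1) + p with hN
    have hNn : n < N := by nlinarith
    rw [show m * n + (p + m) = N by ring] at ih_node
    have h_up := Nat.add_one_mul_choose_eq N n
    have h_right := Nat.choose_succ_right_eq N n
    -- multiply through by `N * (n + 1)` and use the two Pascal-type identities for `C(N, ·)`
    apply Nat.eq_of_mul_eq_mul_left (show 0 < N * (n + 1) by positivity)
    rw [show m * (n + 1) + (p + 1) = N + 1 by omega, succ_succ]
    zify [hNn.le] at *
    linear_combination (↑N + 1) * (↑n + 1) * ih_leaf + (↑N + 1) * (↑n + 1) * ih_node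
      + (↑N + 1) * ↑p * h_right + ↑N * (↑p + 1) * h_up - (↑N + 1) * ↑(N.choose n) * hN

theorem one_mul_eq_choose {m : ℕ} (hm : 0 < m) (n : ℕ) :
    forestCount m 1 n * ((m - 1) * n + 1) = (m * n).choose n := by
  have h := mul_eq_choose hm 1 n
  have h_succ := Nat.choose_mul_succ_eq (m * n) n
  rw [show m * n + 1 - n = (m - 1) * n + 1 by
    obtain ⟨k, rfl⟩ : ∃ k, m = k + 1 := ⟨m - 1, by omega⟩
    rw [Nat.add_sub_cancel, add_mul, one_mul]
    omega] at h_succ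
  apply Nat.eq_of_mul_eq_mul_right (show 0 < m * n + 1 by positivity)
  rw [mul_right_comm, h, one_mul, ← h_succ, mul_comm]

end forestCount

/-- The Fuss–Catalan numbers `a_n = (1/(2n+1)) * C(3n, n)`, counting ternary trees with `n`
internal nodes, satisfy `a_0 = 1` and the recurrence coming from `S = z(1+S)^3`:
`a_n = ∑_{i+j+k = n-1} a_i * a_j * a_k` for `n ≥ 1`. -/
theorem fuss_catalan_recurrence (a : ℕ → ℚ)
    (ha : ∀ n : ℕ, a n = (Nat.choose (3 * n) n : ℚ) / (2 * n + 1)) :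
    a 0 = 1 ∧
    ∀ n : ℕ, 1 ≤ n →
      a n = ∑ p ∈ Finset.HasAntidiagonal.antidiagonal (n - 1),
              a p.1 * ∑ q ∈ Finset.HasAntidiagonal.antidiagonal p.2, a q.1 * a q.2 := by
  have ha_forest (n : ℕ) : a n = forestCount 3 1 n := by
    rw [ha, div_eq_iff (by positivity), ← forestCount.one_mul_eq_choose three_pos n]
    push_cast
    ring
  simp only [ha_forest]
  refine ⟨by simp, fun n hn => ?_⟩
  obtain ⟨n, rfl⟩ := Nat.exists_eq_add_of_le' hn
  have h_cube : forestCount 3 1 (n + 1) = ∑ p ∈ antidiagonal n,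
      forestCount 3 1 p.1 * ∑ q ∈ antidiagonal p.2, forestCount 3 1 q.1 * forestCount 3 1 q.2 := by
    simp only [forestCount.sum_antidiagonal_mul, forestCount.one_succ]
  exact_mod_cast h_cube
end

section
/- The sequence t_n = binomial(n,3) * (3n-9)!/(2n-4)! satisfies the asymptotic estimate t_n ~ (4*sqrt(3)/(3^10 * sqrt(pi))) * n^{-5/2} * (27/4)^n * n! as n tends to infinity. -/
/-!
Stirling's formula gives
`((a + b) n)! / ((a n)! (b n)!) ~ √((a + b) / (2π a b n)) ((a + b)^(a + b) / (a^a b^b))^n`;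
for `a = 2`, `b = 1` this is `(3n)! / (2n)! ~ √(3 / (4πn)) (27/4)^n n!`. The shifts in
`(3n - 9)!` and `(2n - 4)!` cost only polynomial factors, since `(m - k)! ~ m! / m^k`, and
together with `C(n, 3) ~ n^3 / 6` they contribute `n^3 (2n)^4 / (6 (3n)^9) = 8 / (3^10 n^2)`.
-/

open Filter Asymptotics Real Nat

theorem tendsto_const_mul_atTop_nat {a : ℕ} (ha : a ≠ 0) :
    Tendsto (fun n : ℕ => a * n) atTop atTop :=
  tendsto_id.const_mul_atTop' (Nat.pos_of_ne_zero ha)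

theorem factorial_sub_isEquivalent (k : ℕ) :
    (fun n : ℕ => ((n - k)! : ℝ)) ~[atTop] fun n => (n ! : ℝ) / n ^ k := by
  refine (IsEquivalent.refl.div (isEquivalent_descFactorial k)).congr_left ?_
  filter_upwards [eventually_ge_atTop k] with n hn
  have hd : (n.descFactorial k : ℝ) ≠ 0 := by
    exact_mod_cast descFactorial_eq_zero_iff_lt.not.mpr (by omega)
  rw [Pi.div_apply, div_eq_iff hd, ← Nat.cast_mul, factorial_mul_descFactorial hn]

theorem factorial_mul_isEquivalent {a : ℕ} (ha : a ≠ 0) :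
    (fun n : ℕ => ((a * n)! : ℝ)) ~[atTop]
      fun n => √(2 * (a * n) * π) * (a * n / exp 1) ^ (a * n) := by
  exact_mod_cast Stirling.factorial_isEquivalent_stirling.comp_tendsto
    (tendsto_const_mul_atTop_nat ha)

theorem natCast_mul_div_pow_mul (a n : ℕ) (x : ℝ) :
    (a * n / x) ^ (a * n) = ((a : ℝ) ^ a) ^ n * (n / x) ^ (a * n) := by
  rw [mul_div_assoc, mul_pow, ← pow_mul]

theorem factorial_add_mul_div_isEquivalent {a b : ℕ} (ha : a ≠ 0) (hb : b ≠ 0) :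
    (fun n : ℕ => (((a + b) * n)! : ℝ) / ((a * n)! * (b * n)!)) ~[atTop]
      fun n => √((a + b) / (2 * π * a * b * n)) *
        ((a + b) ^ (a + b) / (a ^ a * b ^ b) : ℝ) ^ n := by
  refine ((factorial_mul_isEquivalent (by omega)).div
    ((factorial_mul_isEquivalent ha).mul (factorial_mul_isEquivalent hb))).trans_eventuallyEq ?_
  filter_upwards [eventually_ne_atTop 0] with n hn
  have hn' : (0 : ℝ) < n := by exact_mod_cast Nat.pos_of_ne_zero hn
  have ha' : (0 : ℝ) < a := by exact_mod_cast Nat.pos_of_ne_zero ha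
  have hb' : (0 : ℝ) < b := by exact_mod_cast Nat.pos_of_ne_zero hb
  have hsqrt :
      √(2 * (((a + b : ℕ) : ℝ) * n) * π) / (√(2 * (a * n) * π) * √(2 * (b * n) * π)) =
      √((a + b) / (2 * π * a * b * n)) := by
    rw [← sqrt_mul (by positivity), ← sqrt_div' _ (by positivity)]
    congr 1
    push_cast
    field_simp
  simp only [Pi.div_apply, Pi.mul_apply, natCast_mul_div_pow_mul]
  rw [← hsqrt, div_pow _ ((a : ℝ) ^ a * (b : ℝ) ^ b), mul_pow ((a : ℝ) ^ a), add_mul,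
    pow_add (n / exp 1 : ℝ)]
  push_cast
  field_simp

theorem factorial_three_mul_div_factorial_two_mul_isEquivalent :
    (fun n : ℕ => ((3 * n)! : ℝ) / (2 * n)!) ~[atTop]
      fun n => √(3 / (4 * π * n)) * (27 / 4 : ℝ) ^ n * n ! := by
  have h := (factorial_add_mul_div_isEquivalent (a := 2) (b := 1) two_ne_zero one_ne_zero).mul
    (IsEquivalent.refl (u := fun n : ℕ => (n ! : ℝ)))
  refine (h.congr_left ?_).congr_right ?_ <;> refine Eventually.of_forall fun n => ?_
  · simp only [Pi.mul_apply, one_mul]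
    field_simp
  · simp only [Pi.mul_apply]
    congr 3 <;> push_cast <;> ring

/-- The sequence `t_n = C(n,3) * (3n-9)!/(2n-4)!` of numbers of 3-connected labelled chordal
planar graphs satisfies `t_n ~ (4√3/(3^10 √π)) * n^(-5/2) * (27/4)^n * n!` as `n → ∞`. -/
theorem chordal_triangulation_asymptotics :
    (fun n : ℕ => (Nat.choose n 3 : ℝ) * (Nat.factorial (3 * n - 9) : ℝ) /
        (Nat.factorial (2 * n - 4) : ℝ)) ~[atTop]
    (fun n : ℕ => (4 * Real.sqrt 3 / (3 ^ 10 * Real.sqrt Real.pi)) *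
        (n : ℝ) ^ (-(5 : ℝ) / 2) * (27 / 4 : ℝ) ^ n * (Nat.factorial n : ℝ)) := by
  have h9 := (factorial_sub_isEquivalent 9).comp_tendsto (tendsto_const_mul_atTop_nat three_ne_zero)
  have h4 := (factorial_sub_isEquivalent 4).comp_tendsto (tendsto_const_mul_atTop_nat two_ne_zero)
  have hpoly : (fun n : ℕ => (n : ℝ) ^ 3 / 3 ! * (((3 * n)! : ℝ) / (3 * n : ℕ) ^ 9) /
      (((2 * n)! : ℝ) / (2 * n : ℕ) ^ 4)) =ᶠ[atTop]
      fun n => 8 / 3 ^ 10 * (n : ℝ) ^ (-2 : ℤ) * (((3 * n)! : ℝ) / (2 * n)!) := by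
    filter_upwards [eventually_ne_atTop 0] with n hn
    have : (n : ℝ) ≠ 0 := by exact_mod_cast hn
    push_cast
    field_simp
    ring
  have hconst : (fun n : ℕ => 8 / 3 ^ 10 * (n : ℝ) ^ (-2 : ℤ) *
      (√(3 / (4 * π * n)) * (27 / 4 : ℝ) ^ n * n !)) =ᶠ[atTop]
      fun n => (4 * √3 / (3 ^ 10 * √π)) * (n : ℝ) ^ (-(5 : ℝ) / 2) * (27 / 4 : ℝ) ^ n *
        n ! := by
    filter_upwards [eventually_ne_atTop 0] with n hn
    have hn' : (0 : ℝ) < n := by exact_mod_cast Nat.pos_of_ne_zero hn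
    have hrpow : (n : ℝ) ^ (-(5 : ℝ) / 2) = (n : ℝ) ^ (-2 : ℤ) / √n := by
      rw [sqrt_eq_rpow, ← rpow_intCast, ← rpow_sub hn']
      norm_num
    rw [hrpow, sqrt_div' _ (by positivity), sqrt_mul' _ hn'.le, sqrt_mul (by norm_num),
      show √4 = 2 by rw [show (4 : ℝ) = 2 ^ 2 by norm_num, sqrt_sq (by norm_num)]]
    field_simp
    ring
  exact ((((isEquivalent_choose 3).mul h9).div h4).congr_right hpoly).trans
    ((IsEquivalent.refl.mul factorial_three_mul_div_factorial_two_mul_isEquivalent).congr_right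
      hconst)
end

section
/- Every chordal planar 3-connected graph can be obtained from K4 by a finite sequence of operations, each adding a new vertex adjacent to the three vertices of a triangle that bounds a face in a planar embedding; conversely every graph obtained this way is chordal, planar and 3-connected. -/
/-!
Stacked triangulations are chordal because their labelling is a perfect elimination ordering:
the earlier neighbours of each vertex form a triangle (or lie in the base `K₄`), so on any cycle
the two neighbours of the largest vertex are adjacent. They are 3-connected because every vertex
outside the base `K₄` has three earlier neighbours, one of which survives the removal of any two
vertices; planarity is part of the definition, or automatic on four vertices.

Conversely, by Dirac's lemma a chordal graph that is not complete has a simplicial vertex `v`,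
and a planar graph on at least five vertices is not complete. Planarity forbids `K₅`, so `v` has
at most three neighbours, and 3-connectivity gives at least three, so its neighbourhood is a
triangle. Deleting `v` preserves chordality and planarity, and also 3-connectivity because a path
through `v` can be rerouted along the clique of its neighbours. So by induction `G - v` is a
stacked triangulation, and `G` is obtained from it by stacking `v` onto that triangle.
-/

open SimpleGraph

/-- A graph is chordal if every cycle of length greater than three contains a chord. -/
def Chordal {V : Type*} (G : SimpleGraph V) : Prop :=
  ∀ (u : V) (c : G.Walk u u), c.IsCycle → 4 ≤ c.length →
    ∃ x y, x ∈ c.support ∧ y ∈ c.support ∧ G.Adj x y ∧ s(x, y) ∉ c.edges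

/-- `H` is a minor of `G`: there are pairwise disjoint nonempty connected branch sets in `G`,
one for each vertex of `H`, with an edge of `G` between the branch sets of any two
vertices adjacent in `H`. -/
def HasGraphMinor {V W : Type*} (G : SimpleGraph V) (H : SimpleGraph W) : Prop :=
  ∃ f : W → Set V,
    (∀ w, (f w).Nonempty) ∧
    (∀ w, (G.induce (f w)).Connected) ∧
    (∀ w₁ w₂, w₁ ≠ w₂ → Disjoint (f w₁) (f w₂)) ∧
    (∀ w₁ w₂, H.Adj w₁ w₂ → ∃ a ∈ f w₁, ∃ b ∈ f w₂, G.Adj a b)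

/-- A graph is planar iff (by Kuratowski-Wagner) it has no `K₅` and no `K₃,₃` minor. -/
def Planar {V : Type*} (G : SimpleGraph V) : Prop :=
  ¬ HasGraphMinor G (⊤ : SimpleGraph (Fin 5)) ∧
  ¬ HasGraphMinor G (completeBipartiteGraph (Fin 3) (Fin 3))

/-- A graph is 3-connected if it has at least 4 vertices and removing any set of at most
2 vertices leaves it connected. -/
def ThreeConnected {V : Type*} [Fintype V] (G : SimpleGraph V) : Prop :=
  4 ≤ Fintype.card V ∧ ∀ s : Set V, s.ncard ≤ 2 → (G.induce sᶜ).Connected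

/-- `G` on `Fin n` is a stacked (chordal) triangulation, built in the order of labels:
the first four vertices form a `K₄`, and each later vertex `k` is adjacent among the earlier
vertices to exactly the three vertices of a triangle which bounds a face of the graph built
so far (equivalently, the graph built so far, including `k`, is planar). -/
def IsStacked {n : ℕ} (G : SimpleGraph (Fin n)) : Prop :=
  4 ≤ n ∧
  (∀ i j : Fin n, i.val < 4 → j.val < 4 → i ≠ j → G.Adj i j) ∧
  ∀ k : Fin n, 4 ≤ k.val →
    ∃ a b c : Fin n, a.val < k.val ∧ b.val < k.val ∧ c.val < k.val ∧
      a ≠ b ∧ a ≠ c ∧ b ≠ c ∧ G.Adj a b ∧ G.Adj a c ∧ G.Adj b c ∧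
      (∀ j : Fin n, j.val < k.val → (G.Adj k j ↔ (j = a ∨ j = b ∨ j = c))) ∧
      Planar (G.induce {j : Fin n | j.val ≤ k.val})

namespace SimpleGraph

variable {V W : Type*} {G : SimpleGraph V} {H : SimpleGraph W}

/-- Reachability in `G.induce s`, stated without subtypes. -/
def ReachableIn (G : SimpleGraph V) (s : Set V) (x y : V) : Prop :=
  ∃ p : G.Walk x y, ∀ z ∈ p.support, z ∈ s

namespace ReachableIn

variable {s t : Set V} {x y z : V}

lemma refl (hx : x ∈ s) : G.ReachableIn s x x :=
  ⟨.nil, by simpa⟩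

lemma left_mem (h : G.ReachableIn s x y) : x ∈ s :=
  let ⟨p, hp⟩ := h; hp x p.start_mem_support

lemma right_mem (h : G.ReachableIn s x y) : y ∈ s :=
  let ⟨p, hp⟩ := h; hp y p.end_mem_support

lemma symm (h : G.ReachableIn s x y) : G.ReachableIn s y x :=
  let ⟨p, hp⟩ := h; ⟨p.reverse, by simpa using hp⟩

lemma trans (hxy : G.ReachableIn s x y) (hyz : G.ReachableIn s y z) : G.ReachableIn s x z := by
  obtain ⟨p, hp⟩ := hxy
  obtain ⟨q, hq⟩ := hyz
  exact ⟨p.append q, by simpa [Walk.mem_support_append_iff, or_imp, forall_and] using ⟨hp, hq⟩⟩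

lemma of_adj (hx : x ∈ s) (hy : y ∈ s) (h : G.Adj x y) : G.ReachableIn s x y :=
  ⟨h.toWalk, by simp [hx, hy]⟩

lemma mono (hst : s ⊆ t) (h : G.ReachableIn s x y) : G.ReachableIn t x y :=
  let ⟨p, hp⟩ := h; ⟨p, fun z hz => hst (hp z hz)⟩

lemma map (f : G →g H) (h : G.ReachableIn s x y) : H.ReachableIn (f '' s) (f x) (f y) := by
  obtain ⟨p, hp⟩ := h
  exact ⟨p.map f, by simpa using fun z hz => ⟨z, hp z hz, rfl⟩⟩

lemma comap (f : H ↪g G) {s : Set W} {x y : W} (h : G.ReachableIn (f '' s) (f x) (f y)) :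
    H.ReachableIn s x y := by
  obtain ⟨p, hp⟩ := h
  suffices key : ∀ {x' y' : V} (p : G.Walk x' y'), (∀ z ∈ p.support, z ∈ f '' s) →
      ∀ x y, f x = x' → f y = y' → H.ReachableIn s x y from key p hp x y rfl rfl
  intro x' y' p
  induction p with
  | nil =>
    rintro hp x y rfl hxy
    obtain rfl := f.injective hxy
    exact refl (f.injective.mem_set_image.mp (hp _ (by simp)))
  | cons hadj r ih =>
    rintro hp x y rfl rfl
    have hr : ∀ w ∈ r.support, w ∈ f '' s := fun w hw => hp w (by simp [hw])
    obtain ⟨z, -, rfl⟩ := hr _ r.start_mem_support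
    have hxs := f.injective.mem_set_image.mp (hp (f x) (Walk.start_mem_support _))
    have hzs := f.injective.mem_set_image.mp (hr _ r.start_mem_support)
    exact (of_adj hxs hzs (f.map_rel_iff.mp hadj)).trans (ih hr z y rfl rfl)

lemma mem_of_forall_adj {C : Set V}
    (hC : ∀ x ∈ C, ∀ y ∈ s, G.Adj x y → y ∈ C) (h : G.ReachableIn s x y) (hx : x ∈ C) : y ∈ C := by
  obtain ⟨p, hp⟩ := h
  induction p with
  | nil => exact hx
  | cons hadj r ih =>
    exact ih (hC _ hx _ (hp _ (by simp)) hadj) (fun z hz => hp z (by simp [hz]))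

lemma restrict {a : V} (h : G.ReachableIn s a x) :
    G.ReachableIn {z | G.ReachableIn s a z} a x := by
  classical
  obtain ⟨p, hp⟩ := h
  exact ⟨p, fun z hz =>
    ⟨p.takeUntil z hz, fun w hw => hp w (p.support_takeUntil_subset_support hz hw)⟩⟩

end ReachableIn

lemma reachable_induce_iff {s : Set V} {x y : s} :
    (G.induce s).Reachable x y ↔ G.ReachableIn s x y := by
  constructor
  · rintro ⟨p⟩
    induction p with
    | nil => exact .refl (Subtype.prop _)
    | cons h _ ih => exact (ReachableIn.of_adj (Subtype.prop _) (Subtype.prop _) h).trans ih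
  · rintro ⟨p, hp⟩
    exact ⟨p.induce s hp⟩

lemma induce_connected_iff {s : Set V} :
    (G.induce s).Connected ↔ s.Nonempty ∧ ∀ x ∈ s, ∀ y ∈ s, G.ReachableIn s x y := by
  rw [connected_iff, Set.nonempty_coe_sort.symm]
  simp only [Preconnected, reachable_induce_iff, Subtype.forall]
  tauto

def IsSimplicial (G : SimpleGraph V) (v : V) : Prop :=
  G.IsClique (G.neighborSet v)

lemma isClique_triple {a b c : V} (hab : G.Adj a b) (hac : G.Adj a c) (hbc : G.Adj b c) :
    G.IsClique ({a, b, c} : Set V) := by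
  simp [isClique_insert, hab, hac, hbc]

lemma ReachableIn.diff_singleton {s : Set V} {v x y : V} (hv : G.IsSimplicial v)
    (h : G.ReachableIn s x y) (hx : x ≠ v) (hy : y ≠ v) : G.ReachableIn (s \ {v}) x y := by
  obtain ⟨p, hp⟩ := h
  -- walking along `p` from `x'`, we stand at `x'` itself, or `x' = v` and we stand at a
  -- neighbour of `v`, from which the next vertex of `p` is one step away
  suffices key : ∀ {x' y' : V} (p : G.Walk x' y'), y' ≠ v → (∀ z ∈ p.support, z ∈ s) →
      ∀ x ∈ s, x ≠ v → (x = x' ∨ x' = v ∧ G.Adj x v) → G.ReachableIn (s \ {v}) x y' from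
    key p hy hp x (hp x p.start_mem_support) hx (.inl rfl)
  intro x' y' p
  induction p with
  | nil =>
    rintro hy - x hxs hxv (rfl | ⟨rfl, -⟩)
    exacts [ReachableIn.refl ⟨hxs, hxv⟩, (hy rfl).elim]
  | cons hadj r ih =>
    rename_i z _
    intro hy hp x hxs hxv hx
    have hr : ∀ w ∈ r.support, w ∈ s := fun w hw => hp w (by simp [hw])
    have hzs : z ∈ s := hr z r.start_mem_support
    by_cases hzv : z = v
    · subst hzv
      rcases hx with rfl | ⟨rfl, -⟩
      · exact ih hy hr x hxs hxv (.inr ⟨rfl, hadj⟩)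
      · exact (hadj.ne rfl).elim
    have hstep : G.Adj x z → G.ReachableIn (s \ {v}) x _ := fun h =>
      (ReachableIn.of_adj (s := s \ {v}) ⟨hxs, hxv⟩ ⟨hzs, hzv⟩ h).trans
        (ih hy hr z hzs hzv (.inl rfl))
    rcases hx with rfl | ⟨rfl, hxv'⟩
    · exact hstep hadj
    · by_cases hxz : x = z
      · exact ih hy hr x hxs hxv (.inl hxz)
      · exact hstep (hv hxv'.symm hadj hxz)

lemma IsSimplicial.of_induce {C S : Set V} (hC : ∀ x ∈ C, ∀ y ∉ S, G.Adj x y → y ∈ C) {v : V}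
    (hv : v ∈ C) (h : (G.induce (C ∪ S)).IsSimplicial ⟨v, .inl hv⟩) : G.IsSimplicial v := by
  have hN : ∀ {y}, G.Adj v y → y ∈ C ∪ S := fun {y} hy => by
    by_cases hyS : y ∈ S
    exacts [.inr hyS, .inl (hC v hv y hyS hy)]
  intro x hx y hy hxy
  exact h (x := ⟨x, hN hx⟩) (y := ⟨y, hN hy⟩) hx hy fun h => hxy (congrArg Subtype.val h)

lemma exists_isSimplicial_notMem_of_isClique
    (hpair : ∀ a b, a ≠ b → ¬ G.Adj a b →
      ∃ v w, v ≠ w ∧ ¬ G.Adj v w ∧ G.IsSimplicial v ∧ G.IsSimplicial w)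
    {S : Set V} (hS : G.IsClique S) {x : V} (hx : x ∉ S) : ∃ v ∉ S, G.IsSimplicial v := by
  by_cases hcomplete : ∀ a b, a ≠ b → G.Adj a b
  · exact ⟨x, hx, fun a _ b _ hab => hcomplete a b hab⟩
  push Not at hcomplete
  obtain ⟨a, b, hab, hnadj⟩ := hcomplete
  obtain ⟨v, w, hvw, hnvw, hv, hw⟩ := hpair a b hab hnadj
  by_cases hvS : v ∈ S
  · exact ⟨w, fun hwS => hnvw (hS hvS hwS hvw), hw⟩
  · exact ⟨v, hvS, hv⟩

namespace Walk

variable {u v x y : V}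

lemma exists_length_lt_of_adj_start [DecidableEq V] (p : G.Walk u v) (hy : y ∈ p.support)
    (h : G.Adj u y) (he : s(u, y) ∉ p.edges) : ∃ q : G.Walk u v, q.length < p.length := by
  cases p with
  | nil => exact absurd (by simpa using hy) h.ne'
  | cons h' r =>
    rename_i w
    have hyw : y ≠ w := by rintro rfl; simp at he
    have hyr : y ∈ r.support := by simpa [h.ne'] using hy
    refine ⟨cons h (r.dropUntil y hyr), ?_⟩
    have hsplit := congrArg length (r.take_spec hyr)
    have htake : (r.takeUntil y hyr).length ≠ 0 := fun h0 => hyw (eq_of_length_eq_zero h0).symm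
    simp only [length_cons, length_append] at hsplit ⊢
    omega

lemma exists_length_lt_of_not_isChordless (p : G.Walk u v) (hp : ¬ p.IsChordless) :
    ∃ q : G.Walk u v, q.length < p.length := by
  classical
  simp only [isChordless_iff_forall_mem_edges, not_forall] at hp
  obtain ⟨x, y, hx, hy, hxy, he⟩ := hp
  induction p with
  | nil =>
    simp only [support_nil, List.mem_singleton] at hx hy
    exact absurd (hx.trans hy.symm) hxy.ne
  | cons h r ih =>
    rename_i u w v
    by_cases hxu : x = u
    · subst hxu
      exact exists_length_lt_of_adj_start _ hy hxy he
    by_cases hyu : y = u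
    · subst hyu
      exact exists_length_lt_of_adj_start _ hx hxy.symm (by rwa [Sym2.eq_swap])
    simp only [support_cons, List.mem_cons, hxu, hyu, false_or] at hx hy
    obtain ⟨q, hq⟩ := ih hx hy (fun h' => he (by simp [h']))
    exact ⟨cons h q, by simpa using hq⟩

lemma isChordless_of_length_eq_dist (p : G.Walk u v) (hp : p.length = G.dist u v) :
    p.IsChordless := by
  by_contra h
  obtain ⟨q, hq⟩ := p.exists_length_lt_of_not_isChordless h
  have := G.dist_le q
  omega

lemma IsChordless.map (f : G ↪g H) {p : G.Walk u v} (hp : p.IsChordless) :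
    (p.map f.toHom).IsChordless := by
  rw [isChordless_iff_forall_mem_edges] at hp ⊢
  simp only [support_map, edges_map, List.mem_map]
  rintro _ _ ⟨x, hx, rfl⟩ ⟨y, hy, rfl⟩ hxy
  exact ⟨s(x, y), hp hx hy (f.map_rel_iff.mp hxy), rfl⟩

lemma IsCycle.mk_snd_penultimate_notMem_edges {c : G.Walk v v} (hc : c.IsCycle)
    (hl : 4 ≤ c.length) : s(c.snd, c.penultimate) ∉ c.edges := by
  have hnil := hc.not_nil
  have hedges : c.edges = s(v, c.snd) :: c.tail.edges := by
    conv_lhs => rw [← c.cons_tail_eq hnil]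
    rw [edges_cons]
  rw [hedges, List.mem_cons, not_or]
  refine ⟨fun h => ?_, fun h => ?_⟩
  · rcases Sym2.eq_iff.mp h with ⟨h1, -⟩ | ⟨-, h2⟩
    exacts [(c.adj_snd hnil).ne h1.symm, (c.adj_penultimate hnil).ne h2]
  · have h2 : c.penultimate = c.getVert 2 := by
      rw [hc.isPath_tail.eq_snd_of_mem_edges h]
      exact c.getVert_tail
    have := hc.getVert_injOn (x₁ := c.length - 1) (x₂ := 2) ⟨by omega, by omega⟩
      ⟨by omega, by omega⟩ h2
    omega

end Walk

lemma ReachableIn.exists_isPath_isChordless {s : Set V} {x y : V} (h : G.ReachableIn s x y) :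
    ∃ p : G.Walk x y, p.IsPath ∧ p.IsChordless ∧ ∀ z ∈ p.support, z ∈ s := by
  obtain ⟨q, hq⟩ := (reachable_induce_iff (x := ⟨x, h.left_mem⟩) (y := ⟨y, h.right_mem⟩)).mpr h
    |>.exists_walk_length_eq_dist
  have hsupp : ∀ z ∈ (q.map (Embedding.induce s).toHom).support, z ∈ s := by
    rw [Walk.support_map]
    simp only [List.mem_map]
    rintro _ ⟨z, -, rfl⟩
    exact z.2
  exact ⟨q.map (Embedding.induce s).toHom,
    (q.isPath_of_length_eq_dist hq).map Subtype.val_injective,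
    (q.isChordless_of_length_eq_dist hq).map _, hsupp⟩

end SimpleGraph

section Chordal

variable {V W : Type*} {G : SimpleGraph V} {H : SimpleGraph W}

lemma chordal_iff_not_isChordless :
    Chordal G ↔ ∀ u (c : G.Walk u u), c.IsCycle → 4 ≤ c.length → ¬ c.IsChordless := by
  simp only [Chordal, Walk.isChordless_iff_forall_mem_edges, not_forall, exists_prop]

lemma Chordal.not_isChordless (hG : Chordal G) {u : V} {c : G.Walk u u} (hc : c.IsCycle)
    (hl : 4 ≤ c.length) : ¬ c.IsChordless :=
  chordal_iff_not_isChordless.mp hG u c hc hl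

lemma Chordal.comap (f : G ↪g H) (hH : Chordal H) : Chordal G :=
  chordal_iff_not_isChordless.mpr fun _ c hc hl hch =>
    hH.not_isChordless (hc.map f.injective) (by simpa using hl) (hch.map f)

/-- A graph with a perfect elimination ordering is chordal: on a cycle, the two neighbours of
its largest vertex are adjacent. -/
theorem chordal_of_isClique_lt [LinearOrder V] (h : ∀ v, G.IsClique {w | G.Adj v w ∧ w < v}) :
    Chordal G := by
  classical
  intro u c hc hl
  obtain ⟨v, hv, hmax⟩ := c.support.toFinset.exists_max_image id ⟨u, by simp⟩
  rw [List.mem_toFinset] at hv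
  set c' := c.rotate v hv
  have hc' : c'.IsCycle := hc.rotate hv
  have hnil := hc'.not_nil
  have hlt : ∀ z ∈ c'.support, z ≠ v → z < v := fun z hz hzv =>
    lt_of_le_of_ne (hmax z (by simpa [c'] using hz)) hzv
  have hsnd : c'.snd ∈ c'.support := c'.getVert_mem_support 1
  have hpen : c'.penultimate ∈ c'.support := c'.getVert_mem_support _
  have hadj : G.Adj c'.snd c'.penultimate :=
    h v ⟨c'.adj_snd hnil, hlt _ hsnd (c'.adj_snd hnil).ne'⟩
      ⟨(c'.adj_penultimate hnil).symm, hlt _ hpen (c'.adj_penultimate hnil).ne⟩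
      hc'.snd_ne_penultimate
  refine ⟨c'.snd, c'.penultimate, (c.mem_support_rotate_iff v hv).mp hsnd,
    (c.mem_support_rotate_iff v hv).mp hpen, hadj, fun he => ?_⟩
  exact hc'.mk_snd_penultimate_notMem_edges (by simpa [c'] using hl)
    ((c.rotate_edges v hv).perm.mem_iff.mpr he)

/-- A chordless path whose ends, and no other vertex, are adjacent to an outside vertex `a`
closes up to a chordless cycle through `a`, so in a chordal graph it is a single edge. -/
lemma Chordal.adj_of_isChordless {a s₁ s₂ : V} (hG : Chordal G) {P : G.Walk s₁ s₂}
    (hP : P.IsPath) (hPc : P.IsChordless) (ha : a ∉ P.support) (h₁ : G.Adj a s₁)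
    (h₂ : G.Adj a s₂) (hint : ∀ z ∈ P.support, G.Adj a z → z = s₁ ∨ z = s₂) (hne : s₁ ≠ s₂) :
    G.Adj s₁ s₂ := by
  by_contra hnadj
  have hlen : 2 ≤ P.length := by
    by_contra! hl
    interval_cases h : P.length
    exacts [hne (Walk.eq_of_length_eq_zero h), hnadj (Walk.adj_of_length_eq_one h)]
  set c := Walk.cons h₁ (P.concat h₂.symm)
  have hedge : s(a, s₁) ∉ (P.concat h₂.symm).edges := by
    simp only [Walk.edges_concat, List.concat_eq_append, List.mem_append, List.mem_singleton,
      Sym2.eq_iff, not_or]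
    refine ⟨fun h => ha (P.fst_mem_support_of_mem_edges h), ?_, fun h => hne h.2⟩
    rintro ⟨rfl, -⟩
    exact ha P.end_mem_support
  have hc : c.IsCycle := (Walk.cons_isCycle_iff _ h₁).mpr ⟨hP.concat ha _, hedge⟩
  refine hG.not_isChordless hc (by simp only [c, Walk.length_cons, Walk.length_concat]; omega) ?_
  have hsupp : ∀ z ∈ c.support, z = a ∨ z ∈ P.support := by
    simp only [c, Walk.support_cons, Walk.support_concat, List.mem_cons, List.mem_append]
    tauto
  have hend : ∀ z ∈ P.support, G.Adj a z → s(a, z) ∈ c.edges := fun z hz haz => by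
    rcases hint z hz haz with rfl | rfl <;> simp [c, Sym2.eq_swap]
  rw [Walk.isChordless_iff_forall_mem_edges] at hPc ⊢
  intro x y hx hy hxy
  rcases hsupp x hx with rfl | hxP <;> rcases hsupp y hy with rfl | hyP
  · exact absurd hxy (G.loopless.irrefl _)
  · exact hend y hyP hxy
  · exact Sym2.eq_swap ▸ hend x hxP hxy.symm
  · simp [c, hPc hxP hyP hxy]

lemma Chordal.isClique_of_reachableIn (hG : Chordal G) {a : V} {C S : Set V}
    (hC : ∀ x ∈ C, ∀ y ∈ C, G.ReachableIn C x y) (haC : ∀ x ∈ C, x ≠ a ∧ ¬ G.Adj a x)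
    (hS : ∀ s ∈ S, G.Adj a s ∧ ∃ x ∈ C, G.Adj x s) : G.IsClique S := by
  intro s₁ h₁ s₂ h₂ hne
  obtain ⟨ha₁, x₁, hx₁, hx₁s⟩ := hS s₁ h₁
  obtain ⟨ha₂, x₂, hx₂, hx₂s⟩ := hS s₂ h₂
  have hreach : G.ReachableIn (insert s₁ (insert s₂ C)) s₁ s₂ :=
    ((ReachableIn.of_adj (by simp) (by simp [hx₁]) hx₁s.symm).trans
      ((hC x₁ hx₁ x₂ hx₂).mono (by grind))).trans (.of_adj (by simp [hx₂]) (by simp) hx₂s)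
  obtain ⟨P, hP, hPc, hPU⟩ := hreach.exists_isPath_isChordless
  refine hG.adj_of_isChordless hP hPc (fun ha => ?_) ha₁ ha₂ (fun z hz haz => ?_) hne
  · rcases hPU a ha with rfl | rfl | haC'
    exacts [G.loopless.irrefl _ ha₁, G.loopless.irrefl _ ha₂, (haC a haC').1 rfl]
  · rcases hPU z hz with rfl | rfl | hzC
    exacts [.inl rfl, .inr rfl, ((haC z hzC).2 haz).elim]

/-- Dirac's lemma. -/
theorem Chordal.exists_isSimplicial_pair [Finite V] (hG : Chordal G) {a b : V} (hab : a ≠ b)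
    (hnadj : ¬ G.Adj a b) :
    ∃ v w, v ≠ w ∧ ¬ G.Adj v w ∧ G.IsSimplicial v ∧ G.IsSimplicial w := by
  induction hn : Nat.card V using Nat.strong_induction_on generalizing V with
  | _ n ih =>
  -- by induction `G[C ∪ S]` has a simplicial vertex outside the clique `S`; it stays simplicial
  -- in `G` because `C` has no neighbours outside `C ∪ S`
  have side : ∀ C S : Set V, G.IsClique S → (∀ x ∈ C, ∀ y ∉ S, G.Adj x y → y ∈ C) →
      ∀ c ∈ C, c ∉ S → ∀ d ∉ C ∪ S, ∃ v ∈ C, G.IsSimplicial v := by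
    intro C S hS hC c hc hcS d hd
    obtain ⟨⟨v, hvCS⟩, hvS, hv⟩ := exists_isSimplicial_notMem_of_isClique
      (fun x y hxy hnxy => ih _ (hn ▸ Finite.card_subtype_lt hd) (hG.comap (Embedding.induce _))
        hxy hnxy rfl)
      (S := Subtype.val ⁻¹' S) (fun x hx y hy hxy => hS hx hy (Subtype.coe_ne_coe.mpr hxy))
      (x := ⟨c, .inl hc⟩) hcS
    have hvC : v ∈ C := hvCS.resolve_right hvS
    exact ⟨v, hvC, hv.of_induce hC hvC⟩
  -- `Cb` is the component of `b` in `G - N[a]`, and its neighbourhood `S` is a clique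
  -- separating it from the component `Ca` of `a` in `G - S`
  set T : Set V := {x | x ≠ a ∧ ¬ G.Adj a x}
  set Cb : Set V := {x | G.ReachableIn T b x}
  set S : Set V := {s | G.Adj a s ∧ ∃ x ∈ Cb, G.Adj x s}
  set Ca : Set V := {x | G.ReachableIn Sᶜ a x}
  have hCbT : ∀ x ∈ Cb, x ∈ T := fun x hx => hx.right_mem
  have hbCb : b ∈ Cb := .refl ⟨hab.symm, hnadj⟩
  have haS : a ∉ S := fun h => G.loopless.irrefl _ h.1
  have hSCb : ∀ s ∈ S, s ∉ Cb := fun s hs hsCb => (hCbT s hsCb).2 hs.1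
  have hS : G.IsClique S := hG.isClique_of_reachableIn
    (fun x hx y hy => hx.restrict.symm.trans hy.restrict) hCbT (fun _ hs => hs)
  have hCb : ∀ x ∈ Cb, ∀ y ∉ S, G.Adj x y → y ∈ Cb := by
    intro x hx y hyS hxy
    by_cases hyT : y ∈ T
    · exact ReachableIn.trans hx (.of_adj (hCbT x hx) hyT hxy)
    simp only [T, Set.mem_ofPred_eq, not_and_or, not_not] at hyT
    rcases hyT with rfl | hay
    · exact ((hCbT x hx).2 hxy.symm).elim
    · exact (hyS ⟨hay, x, hx, hxy⟩).elim
  have hCa : ∀ x ∈ Ca, ∀ y ∉ S, G.Adj x y → y ∈ Ca := fun x hx y hy hxy =>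
    ReachableIn.trans hx (.of_adj hx.right_mem hy hxy)
  have hCaCb : ∀ x ∈ Ca, x ∉ Cb := fun x hx hxb =>
    (hCbT a (hx.symm.mem_of_forall_adj (fun y hy z hz => hCb y hy z hz) hxb)).1 rfl
  obtain ⟨v, hv, hvs⟩ := side Cb S hS hCb b hbCb (fun h => hSCb b h hbCb) a
    fun h => h.elim (fun h => (hCbT a h).1 rfl) haS
  obtain ⟨w, hw, hws⟩ := side Ca S hS hCa a (.refl haS) haS b
    fun h => h.elim (fun h => hCaCb b h hbCb) (fun h => hSCb b h hbCb)
  exact ⟨v, w, fun h => hCaCb w hw (h ▸ hv), fun h => hCaCb w hw (hCb v hv w hw.right_mem h),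
    hvs, hws⟩

end Chordal

section Planar

variable {V W X : Type*} {G : SimpleGraph V} {H : SimpleGraph W}

lemma hasGraphMinor_self (G : SimpleGraph V) : HasGraphMinor G G := by
  refine ⟨fun v => {v}, fun v => Set.singleton_nonempty v, fun v => ?_,
    fun v w h => Set.disjoint_singleton.mpr h, fun v w h => ⟨v, rfl, w, rfl, h⟩⟩
  rw [induce_singleton_eq_top]
  exact connected_top

lemma HasGraphMinor.of_copy {K : SimpleGraph X} (f : Copy G H) (hG : HasGraphMinor G K) :
    HasGraphMinor H K := by
  obtain ⟨B, hne, hconn, hdisj, hadj⟩ := hG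
  refine ⟨fun x => f '' B x, fun x => (hne x).image f, fun x => ?_,
    fun x y hxy => (Set.disjoint_image_iff f.injective).mpr (hdisj x y hxy), fun x y hxy => ?_⟩
  · obtain ⟨-, hreach⟩ := induce_connected_iff.mp (hconn x)
    refine induce_connected_iff.mpr ⟨(hne x).image f, ?_⟩
    rintro _ ⟨a, ha, rfl⟩ _ ⟨b, hb, rfl⟩
    exact (hreach a ha b hb).map f.toHom
  · obtain ⟨a, ha, b, hb, hab⟩ := hadj x y hxy
    exact ⟨f a, ⟨a, ha, rfl⟩, f b, ⟨b, hb, rfl⟩, f.toHom.map_adj hab⟩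

lemma HasGraphMinor.card_le [Finite V] {K : SimpleGraph X} (h : HasGraphMinor G K) :
    Nat.card X ≤ Nat.card V := by
  obtain ⟨B, hne, -, hdisj, -⟩ := h
  refine Nat.card_le_card_of_injective (fun x => (hne x).some) fun x y hxy => ?_
  by_contra hne'
  have hsome : (hne x).some = (hne y).some := hxy
  exact Set.disjoint_left.mp (hdisj x y hne') (hne x).some_mem (hsome ▸ (hne y).some_mem)

lemma Planar.of_copy (f : Copy G H) (hH : Planar H) : Planar G :=
  ⟨fun h => hH.1 (h.of_copy f), fun h => hH.2 (h.of_copy f)⟩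

lemma Planar.of_induce {s : Set V} (hs : ∀ x, x ∈ s) (h : Planar (G.induce s)) : Planar G :=
  h.of_copy ⟨⟨fun x => ⟨x, hs x⟩, fun h => h⟩, fun _ _ h => congrArg Subtype.val h⟩

lemma planar_of_card_lt_five [Finite V] (h : Nat.card V < 5) : Planar G := by
  refine ⟨fun hm => ?_, fun hm => ?_⟩ <;>
  · have := hm.card_le
    simp only [Nat.card_eq_fintype_card, Fintype.card_sum, Fintype.card_fin] at this
    omega

lemma Planar.cliqueFree_five (h : Planar G) : G.CliqueFree 5 :=
  cliqueFree_iff.mpr ⟨fun f => (h.of_copy f).1 (hasGraphMinor_self _)⟩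

lemma Planar.exists_not_adj [Fintype V] (h : Planar G) (h5 : 5 ≤ Fintype.card V) :
    ∃ a b, a ≠ b ∧ ¬ G.Adj a b := by
  by_contra! hcomplete
  obtain ⟨T, -, hT⟩ := Finset.exists_subset_card_eq (s := (Finset.univ : Finset V)) h5
  exact h.cliqueFree_five T ⟨fun x _ y _ hxy => hcomplete x y hxy, hT⟩

lemma SimpleGraph.IsSimplicial.ncard_neighborSet_le_three {v : V} (hv : G.IsSimplicial v)
    (h : G.CliqueFree 5) : (G.neighborSet v).ncard ≤ 3 := by
  classical
  by_contra! h4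
  obtain ⟨t, ht, ht4⟩ := Set.exists_subset_card_eq (show 4 ≤ (G.neighborSet v).ncard by omega)
  obtain ⟨T, rfl⟩ := (Set.finite_of_ncard_pos (by omega : 0 < t.ncard)).exists_finset_coe
  rw [Set.ncard_coe_finset] at ht4
  exact h _ ((IsNClique.mk (hv.subset ht) ht4).insert fun b hb => ht hb)

end Planar

section ThreeConnected

variable {V W : Type*} [Fintype V] {G : SimpleGraph V} {H : SimpleGraph W}

lemma card_compl_singleton (v : V) [Fintype ↥({v}ᶜ : Set V)] :
    Fintype.card ↥({v}ᶜ : Set V) + 1 = Fintype.card V := by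
  have := Set.ncard_add_ncard_compl {v}
  rw [Set.ncard_singleton, Nat.card_eq_fintype_card, ← Nat.card_coe_set_eq,
    Nat.card_eq_fintype_card] at this
  omega

lemma threeConnected_iff : ThreeConnected G ↔ 4 ≤ Fintype.card V ∧
    ∀ s : Set V, s.ncard ≤ 2 → ∀ x ∉ s, ∀ y ∉ s, G.ReachableIn sᶜ x y := by
  refine and_congr_right fun hcard => forall₂_congr fun s hs => ?_
  rw [induce_connected_iff]
  simp only [Set.mem_compl_iff]
  refine ⟨fun h => h.2, fun h => ⟨?_, h⟩⟩
  by_contra hempty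
  rw [Set.not_nonempty_iff_eq_empty, Set.compl_empty_iff] at hempty
  rw [hempty, Set.ncard_univ, Nat.card_eq_fintype_card] at hs
  omega

lemma ThreeConnected.of_iso [Fintype W] (e : G ≃g H) (hH : ThreeConnected H) :
    ThreeConnected G := by
  rw [threeConnected_iff] at hH ⊢
  refine ⟨(Fintype.card_congr e.toEquiv).symm ▸ hH.1, fun s hs x hx y hy => ?_⟩
  have hreach := hH.2 (e '' s) ((Set.ncard_image_of_injective s e.injective).trans_le hs) (e x)
    (e.injective.mem_set_image.not.mpr hx) (e y) (e.injective.mem_set_image.not.mpr hy)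
  rw [← Set.image_compl_eq e.bijective] at hreach
  exact hreach.comap e.toEmbedding

lemma ThreeConnected.three_le_ncard_neighborSet (hG : ThreeConnected G) (v : V) :
    3 ≤ (G.neighborSet v).ncard := by
  rw [threeConnected_iff] at hG
  by_contra! h
  obtain ⟨w, hw⟩ : (insert v (G.neighborSet v))ᶜ.Nonempty := by
    rw [Set.nonempty_compl]
    intro huniv
    have := Set.ncard_insert_le v (G.neighborSet v)
    rw [huniv, Set.ncard_univ, Nat.card_eq_fintype_card] at this
    omega
  rw [Set.mem_compl_iff, Set.mem_insert_iff, not_or] at hw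
  have hwv := (hG.2 (G.neighborSet v) (by omega) v (G.loopless.irrefl v) w hw.2).mem_of_forall_adj
    (C := {v}) (fun x hx y hy hxy => (hy (hx ▸ hxy)).elim) rfl
  exact hw.1 hwv

lemma ThreeConnected.adj_of_card_eq_four (hG : ThreeConnected G) (h4 : Fintype.card V = 4)
    {x y : V} (hxy : x ≠ y) : G.Adj x y := by
  rw [threeConnected_iff] at hG
  have hs : ({x, y}ᶜ : Set V).ncard ≤ 2 := by
    have := Set.ncard_add_ncard_compl {x, y}
    rw [Set.ncard_pair hxy, Nat.card_eq_fintype_card] at this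
    omega
  by_contra hnadj
  have hreach := hG.2 _ hs x (by simp) y (by simp)
  rw [compl_compl] at hreach
  refine hxy (hreach.mem_of_forall_adj (C := {x}) (fun z hz w hw hzw => ?_) rfl).symm
  rcases hw with rfl | rfl
  exacts [rfl, (hnadj (hz ▸ hzw)).elim]

lemma ThreeConnected.induce_compl_singleton {v : V} [Fintype ↥({v}ᶜ : Set V)]
    (hG : ThreeConnected G) (hv : G.IsSimplicial v) (h5 : 5 ≤ Fintype.card V) :
    ThreeConnected (G.induce {v}ᶜ) := by
  rw [threeConnected_iff] at hG ⊢
  refine ⟨by have := card_compl_singleton v; omega, fun s hs x hx y hy => ?_⟩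
  have hreach := hG.2 (Subtype.val '' s)
    ((Set.ncard_image_of_injective s Subtype.val_injective).trans_le hs) x
    (Subtype.val_injective.mem_set_image.not.mpr hx) y
    (Subtype.val_injective.mem_set_image.not.mpr hy)
  have hset : (Subtype.val '' s)ᶜ \ {v} = (Embedding.induce {v}ᶜ : G.induce {v}ᶜ ↪g G) '' sᶜ := by
    ext z
    constructor
    · rintro ⟨hz, hzv⟩
      exact ⟨⟨z, hzv⟩, fun hzs => hz ⟨_, hzs, rfl⟩, rfl⟩
    · rintro ⟨z, hz, rfl⟩
      exact ⟨Subtype.val_injective.mem_set_image.not.mpr hz, z.2⟩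
  have := hreach.diff_singleton hv x.2 y.2
  rw [hset] at this
  exact this.comap (Embedding.induce _)

end ThreeConnected

lemma exists_mem_triple_notMem {α : Type*} [Finite α] {s : Set α} (hs : s.ncard ≤ 2) {a b c : α}
    (hab : a ≠ b) (hac : a ≠ c) (hbc : b ≠ c) : ∃ d ∈ ({a, b, c} : Set α), d ∉ s := by
  by_contra! h
  have := Set.ncard_le_ncard h
  rw [Set.ncard_eq_three.mpr ⟨a, b, c, hab, hac, hbc, rfl⟩] at this
  omega

section Stacked

variable {n : ℕ} {G : SimpleGraph (Fin n)}

lemma IsStacked.chordal (hG : IsStacked G) : Chordal G := by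
  refine chordal_of_isClique_lt fun v x ⟨hvx, hxv⟩ y ⟨hvy, hyv⟩ hxy => ?_
  by_cases hv : 4 ≤ v.val
  · obtain ⟨a, b, c, -, -, -, -, -, -, hab, hac, hbc, hnbr, -⟩ := hG.2.2 v hv
    exact isClique_triple hab hac hbc ((hnbr x hxv).mp hvx) ((hnbr y hyv).mp hvy) hxy
  · exact hG.2.1 x y (by omega) (by omega) hxy

lemma IsStacked.planar (hG : IsStacked G) : Planar G := by
  rcases Nat.lt_or_ge n 5 with h | h
  · exact planar_of_card_lt_five (by simpa using h)
  obtain ⟨-, -, -, -, -, -, -, -, -, -, -, -, -, hplanar⟩ :=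
    hG.2.2 ⟨n - 1, by omega⟩ (show 4 ≤ n - 1 by omega)
  exact hplanar.of_induce fun j => Nat.le_sub_one_of_lt j.isLt

lemma IsStacked.threeConnected (hG : IsStacked G) : ThreeConnected G := by
  have h4 := hG.1
  rw [threeConnected_iff]
  refine ⟨by simpa using h4, fun s hs => ?_⟩
  obtain ⟨w, hw, hws⟩ := exists_mem_triple_notMem hs (a := ⟨0, by omega⟩) (b := ⟨1, by omega⟩)
    (c := ⟨2, by omega⟩) (by simp [Fin.ext_iff]) (by simp [Fin.ext_iff]) (by simp [Fin.ext_iff])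
  have hw4 : w.val < 4 := by rcases hw with rfl | rfl | rfl <;> simp
  have key : ∀ x ∉ s, G.ReachableIn sᶜ x w := by
    intro x
    induction x using WellFoundedLT.induction with
    | _ x ih =>
    intro hx
    by_cases hx4 : x.val < 4
    · by_cases hxw : x = w
      · exact hxw ▸ .refl hx
      · exact .of_adj hx hws (hG.2.1 x w hx4 hw4 hxw)
    obtain ⟨a, b, c, ha, hb, hc, hab, hac, hbc, -, -, -, hnbr, -⟩ := hG.2.2 x (by omega)
    obtain ⟨d, hd, hds⟩ := exists_mem_triple_notMem hs hab hac hbc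
    have hdx : d.val < x.val := by rcases hd with rfl | rfl | rfl <;> assumption
    exact (ReachableIn.of_adj hx hds ((hnbr d hdx).mpr hd)).trans (ih d hdx hds)
  exact fun x hx y hy => (key x hx).trans (key y hy).symm

lemma isStacked_fin_four_of_threeConnected {G : SimpleGraph (Fin 4)} (hG : ThreeConnected G) :
    IsStacked G :=
  ⟨le_rfl, fun _ _ _ _ hij => hG.adj_of_card_eq_four (Fintype.card_fin 4) hij,
    fun k hk => absurd k.isLt (by omega)⟩

lemma planar_induce_le_castSucc {m : ℕ} {G : SimpleGraph (Fin (m + 1))} {H : SimpleGraph (Fin m)}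
    (hGH : ∀ i j, G.Adj i.castSucc j.castSucc ↔ H.Adj i j) (k : Fin m)
    (hk : Planar (H.induce {j | j.val ≤ k.val})) :
    Planar (G.induce {j | j.val ≤ k.castSucc.val}) := by
  have hlast : ∀ z : {j : Fin (m + 1) | j.val ≤ k.castSucc.val}, z.1 ≠ Fin.last m :=
    fun z h => by
      have := z.2
      simp only [h, Set.mem_ofPred_eq, Fin.val_last, Fin.val_castSucc] at this
      omega
  refine hk.of_copy ⟨⟨fun z => ⟨z.1.castPred (hlast z), z.2⟩, fun {z w} h => ?_⟩, fun z w h => ?_⟩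
  · simpa [← hGH] using h
  · exact Subtype.ext (by simpa [Fin.castPred_inj] using congrArg Subtype.val h)

lemma IsStacked.snoc {m : ℕ} {H : SimpleGraph (Fin m)} (hH : IsStacked H)
    {G : SimpleGraph (Fin (m + 1))} (hGH : ∀ i j, G.Adj i.castSucc j.castSucc ↔ H.Adj i j)
    {a b c : Fin m} (hab : a ≠ b) (hac : a ≠ c) (hbc : b ≠ c)
    (htri : H.Adj a b ∧ H.Adj a c ∧ H.Adj b c)
    (hlast : ∀ j, G.Adj (Fin.last m) j.castSucc ↔ j = a ∨ j = b ∨ j = c) (hG : Planar G) :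
    IsStacked G := by
  have hm := hH.1
  have hcast : ∀ j : Fin (m + 1), ∀ l : ℕ, j.val < l → l ≤ m → ∃ j' : Fin m, j'.castSucc = j :=
    fun j l hj hl => Fin.exists_castSucc_eq.mpr fun h => by
      simp only [h, Fin.val_last] at hj
      omega
  refine ⟨by omega, fun i j hi hj hij => ?_, fun k hk => ?_⟩
  · obtain ⟨i, rfl⟩ := hcast i 4 hi hm
    obtain ⟨j, rfl⟩ := hcast j 4 hj hm
    exact (hGH i j).mpr (hH.2.1 i j hi hj (ne_of_apply_ne _ hij))
  by_cases hkl : k = Fin.last m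
  · subst hkl
    refine ⟨a.castSucc, b.castSucc, c.castSucc, by simp, by simp, by simp, by simpa, by simpa,
      by simpa, (hGH _ _).mpr htri.1, (hGH _ _).mpr htri.2.1, (hGH _ _).mpr htri.2.2,
      fun j hj => ?_, hG.of_copy (Embedding.induce _).toCopy⟩
    obtain ⟨j, rfl⟩ := hcast j m hj le_rfl
    simp [hlast]
  obtain ⟨k, rfl⟩ := Fin.exists_castSucc_eq.mpr hkl
  obtain ⟨a, b, c, ha, hb, hc, hab, hac, hbc, h₁, h₂, h₃, hnbr, hpl⟩ := hH.2.2 k hk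
  refine ⟨a.castSucc, b.castSucc, c.castSucc, ha, hb, hc, by simpa, by simpa, by simpa,
    (hGH _ _).mpr h₁, (hGH _ _).mpr h₂, (hGH _ _).mpr h₃, fun j hj => ?_,
    planar_induce_le_castSucc hGH k hpl⟩
  obtain ⟨j, rfl⟩ := hcast j k.val hj k.isLt.le
  simp [hGH, hnbr j hj]

end Stacked

section Forward

variable {V : Type*} {G : SimpleGraph V}

lemma exists_isSimplicial_neighborSet_eq_triple [Fintype V] (hc : Chordal G) (hp : Planar G)
    (ht : ThreeConnected G) (h5 : 5 ≤ Fintype.card V) :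
    ∃ v a b c, a ≠ b ∧ a ≠ c ∧ b ≠ c ∧ G.neighborSet v = {a, b, c} ∧ G.IsSimplicial v := by
  obtain ⟨a, b, hab, hnadj⟩ := hp.exists_not_adj h5
  obtain ⟨v, -, -, -, hv, -⟩ := hc.exists_isSimplicial_pair hab hnadj
  obtain ⟨a, b, c, hab, hac, hbc, hN⟩ := Set.ncard_eq_three.mp <|
    le_antisymm (hv.ncard_neighborSet_le_three hp.cliqueFree_five)
      (ht.three_le_ncard_neighborSet v)
  exact ⟨v, a, b, c, hab, hac, hbc, hN, hv⟩

lemma IsStacked.exists_iso_of_induce_compl_singleton {m : ℕ} {H : SimpleGraph (Fin m)}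
    (hH : IsStacked H) {v : V} (ψ : G.induce {v}ᶜ ≃g H) {a b c : V} (hab : a ≠ b) (hac : a ≠ c)
    (hbc : b ≠ c) (hN : G.neighborSet v = {a, b, c}) (hv : G.IsSimplicial v) (hp : Planar G) :
    ∃ G' : SimpleGraph (Fin (m + 1)), IsStacked G' ∧ Nonempty (G ≃g G') := by
  classical
  -- `v` becomes the last vertex, and the other vertices are labelled by `ψ`
  let e : V ≃ Fin (m + 1) := (Equiv.optionSubtypeNe v).symm.trans
    ((Equiv.optionCongr ((Equiv.subtypeEquivRight fun _ => Set.mem_compl_singleton_iff.symm).trans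
      ψ.toEquiv)).trans finSuccEquivLast.symm)
  have he_cast : ∀ i, e.symm i.castSucc = ψ.symm i := fun i => by
    simp only [e, Equiv.optionCongr_trans, Equiv.symm_trans, Equiv.symm_symm,
      ← Equiv.optionCongr_symm, Equiv.trans_apply, finSuccEquivLast_castSucc,
      Equiv.optionCongr_apply, Option.map_some, Equiv.optionSubtypeNe_apply, Option.casesOn'_some,
      Equiv.subtypeEquivRight_symm_apply_coe]
    rfl
  have he_last : e.symm (Fin.last m) = v := by simp [e, ← Equiv.optionCongr_symm]
  have hva : G.Adj v a := by simp [← mem_neighborSet, hN]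
  have hvb : G.Adj v b := by simp [← mem_neighborSet, hN]
  have hvc : G.Adj v c := by simp [← mem_neighborSet, hN]
  have hψ : ∀ {x y : V} (hx : x ≠ v) (hy : y ≠ v), H.Adj (ψ ⟨x, hx⟩) (ψ ⟨y, hy⟩) ↔ G.Adj x y :=
    fun _ _ => ψ.map_rel_iff
  have hψ_ne : ∀ {x y : V} (hx : x ≠ v) (hy : y ≠ v), x ≠ y → ψ ⟨x, hx⟩ ≠ ψ ⟨y, hy⟩ :=
    fun _ _ hxy h => hxy (congrArg Subtype.val (ψ.injective h))
  refine ⟨G.comap e.symm, hH.snoc (fun i j => ?_) (hψ_ne hva.ne' hvb.ne' hab)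
    (hψ_ne hva.ne' hvc.ne' hac) (hψ_ne hvb.ne' hvc.ne' hbc)
    ⟨(hψ _ _).mpr (hv hva hvb hab), (hψ _ _).mpr (hv hva hvc hac), (hψ _ _).mpr (hv hvb hvc hbc)⟩
    (fun j => ?_) (hp.of_copy (Iso.comap e.symm G).toEmbedding.toCopy),
    ⟨(Iso.comap e.symm G).symm⟩⟩
  · rw [comap_adj, he_cast, he_cast]
    exact ψ.symm.map_rel_iff
  · have hsymm : ∀ (x : V) (hx : x ≠ v), (ψ.symm j : V) = x ↔ j = ψ ⟨x, hx⟩ := fun x hx => by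
      rw [← ψ.symm_apply_eq, Subtype.ext_iff]
    rw [comap_adj, he_last, he_cast, ← mem_neighborSet, hN, Set.mem_insert_iff,
      Set.mem_insert_iff, Set.mem_singleton_iff, hsymm a hva.ne', hsymm b hvb.ne', hsymm c hvc.ne']

theorem exists_isStacked_iso [Fintype V] (n : ℕ) (hn : Fintype.card V = n) (hc : Chordal G)
    (hp : Planar G) (ht : ThreeConnected G) :
    ∃ G' : SimpleGraph (Fin n), IsStacked G' ∧ Nonempty (G ≃g G') := by
  have h4 : 4 ≤ n := hn ▸ ht.1
  induction n, h4 using Nat.le_induction generalizing V with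
  | base =>
    let e := (Fintype.equivFinOfCardEq hn).symm
    exact ⟨G.comap e, isStacked_fin_four_of_threeConnected (ht.of_iso (Iso.comap e G)),
      ⟨(Iso.comap e G).symm⟩⟩
  | succ m hm ih =>
    classical
    obtain ⟨v, a, b, c, hab, hac, hbc, hN, hv⟩ :=
      exists_isSimplicial_neighborSet_eq_triple hc hp ht (by omega)
    obtain ⟨H, hH, ⟨ψ⟩⟩ := ih (by have := card_compl_singleton v; omega)
      (hc.comap (Embedding.induce _)) (hp.of_copy (Embedding.induce _).toCopy)
      (ht.induce_compl_singleton hv (by omega))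
    exact hH.exists_iso_of_induce_compl_singleton ψ hab hac hbc hN hv hp

end Forward

/-- A finite graph is chordal, planar and 3-connected if and only if, up to relabelling,
it is obtained from `K₄` by repeatedly adding a new vertex adjacent to the three vertices
of a triangle bounding a face in a planar embedding (a stacked triangulation). -/
theorem chordal_planar_three_connected_iff_stacked (n : ℕ) (G : SimpleGraph (Fin n)) :
    (Chordal G ∧ Planar G ∧ ThreeConnected G) ↔
      ∃ G' : SimpleGraph (Fin n), IsStacked G' ∧ Nonempty (G ≃g G') := by
  constructor
  · rintro ⟨hc, hp, ht⟩
    exact exists_isStacked_iso n (Fintype.card_fin n) hc hp ht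
  · rintro ⟨G', hG', ⟨e⟩⟩
    exact ⟨hG'.chordal.comap e.toEmbedding, hG'.planar.of_copy e.toEmbedding.toCopy,
      hG'.threeConnected.of_iso e⟩
end

section
/- If D(z) is the unique formal power series with constant term 1 and non-negative coefficients satisfying D = 1/(1 − z^2 D^4 (1 + S(z^3 D^6))), where S = z(1+S)^3 with S(0)=0, then B(z) = zD(z) satisfies B^9 − z^2 B^5 + z^3 B^4 + z^3 B^3 − 3 z^4 B^2 + 3 z^5 B − z^6 = 0 as formal power series identities. -/
open PowerSeries

/-!
Writing `w = x² d⁵ (1 + t)`, the equation for `d` says exactly `d - 1 = w`, and the equation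
for `t` gives `w³ = x³ d⁹ t = x d⁴ (w - x² d⁵)`. Eliminating `t` this way leaves the cubic
`(d - 1)³ = x d⁴ (d - 1) - x³ d⁹`, which after multiplying by `x⁶` is the claimed equation
for `b = x d`.
-/

section Elimination

variable {R : Type*} [CommRing R] {x d t : R}

theorem sub_one_cube_eq_of_mul_one_sub_eq_one (hd : d * (1 - x ^ 2 * d ^ 4 * (1 + t)) = 1)
    (ht : t = x ^ 3 * d ^ 6 * (1 + t) ^ 3) :
    (d - 1) ^ 3 = x * d ^ 4 * (d - 1) - x ^ 3 * d ^ 9 := by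
  set w := x ^ 2 * d ^ 5 * (1 + t)
  have hw : d - 1 = w := by linear_combination hd
  linear_combination ((d - 1) ^ 2 + (d - 1) * w + w ^ 2 - x * d ^ 4) * hw - x ^ 3 * d ^ 9 * ht

end Elimination

theorem chordal_maps_elimination_general (D T B : PowerSeries ℚ)
    (hT : T = PowerSeries.X ^ 3 * D ^ 6 * (1 + T) ^ 3)
    (hD : D * (1 - PowerSeries.X ^ 2 * D ^ 4 * (1 + T)) = 1)
    (hB : B = PowerSeries.X * D) :
    B ^ 9 - PowerSeries.X ^ 2 * B ^ 5 + PowerSeries.X ^ 3 * B ^ 4 +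
      PowerSeries.X ^ 3 * B ^ 3 - 3 * PowerSeries.X ^ 4 * B ^ 2 +
      3 * PowerSeries.X ^ 5 * B - PowerSeries.X ^ 6 = 0 := by
  subst hB
  linear_combination (X : PowerSeries ℚ) ^ 6 * sub_one_cube_eq_of_mul_one_sub_eq_one hD hT

/-- Algebraic elimination identity: let `S` be the ternary-tree series (`S(0)=0`,
`S = z(1+S)^3`), let `T = S(z^3 D^6)` (encoded by `T(0)=0` and `T = z^3 D^6 (1+T)^3`, which
uniquely characterises the substitution), and let `D` be the series with `D(0)=1` and
non-negative coefficients satisfying `D = 1/(1 - z^2 D^4 (1 + S(z^3 D^6)))`. Then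
`B = z D` satisfies `B^9 - z^2 B^5 + z^3 B^4 + z^3 B^3 - 3 z^4 B^2 + 3 z^5 B - z^6 = 0`. -/
theorem chordal_maps_elimination (S D T B : PowerSeries ℚ)
    (hS0 : PowerSeries.constantCoeff S = 0)
    (hS : S = PowerSeries.X * (1 + S) ^ 3)
    (hT0 : PowerSeries.constantCoeff T = 0)
    (hT : T = PowerSeries.X ^ 3 * D ^ 6 * (1 + T) ^ 3)
    (hD0 : PowerSeries.constantCoeff D = 1)
    (hDnonneg : ∀ n : ℕ, 0 ≤ PowerSeries.coeff n D)
    (hD : D * (1 - PowerSeries.X ^ 2 * D ^ 4 * (1 + T)) = 1)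
    (hB : B = PowerSeries.X * D) :
    B ^ 9 - PowerSeries.X ^ 2 * B ^ 5 + PowerSeries.X ^ 3 * B ^ 4 +
      PowerSeries.X ^ 3 * B ^ 3 - 3 * PowerSeries.X ^ 4 * B ^ 2 +
      3 * PowerSeries.X ^ 5 * B - PowerSeries.X ^ 6 = 0 :=
  chordal_maps_elimination_general D T B hT hD hB
end
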